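/- arXiv:2604.08066 — 5 statements merged into one kernel-verified Lean document; each statement's English description precedes it below -/
import Mathlib

section
/- Let G be a finite group, X a locally compact Hausdorff G-space, K ⊆ X a G-invariant compact subspace, and Z a discrete transitive G-set. If f : K → Z is a continuous G-equivariant map, then there exists a G-invariant open subspace U ⊇ K of X and a continuous G-equivariant map f̂ : U → Z extending f. -/
/-!
The fibres of `f` over the finitely many points of `f '' K` are disjoint compact sets, so they have
pairwise disjoint open neighbourhoods; sending the neighbourhood of the fibre over `z` to `z`
extends `f` to a locally constant map `F` on an open set `U ⊇ K`. Equivariance of `F` at a point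
is an open condition (both sides are locally constant and `G` is finite), so the points `x` with
`g • x ∈ U` and `F (g • x) = g • F x` for all `g` form an open set; it is `G`-invariant and
contains `K` because `f` is equivariant there.
-/

open Set Filter Topology

theorem Set.PairwiseDisjoint.exists_eq_of_mem {X ι : Type*} {s : Set ι} {W : ι → Set X}
    (hW : s.PairwiseDisjoint W) (f : X → ι) :
    ∃ F : X → ι, ∀ i ∈ s, ∀ x ∈ W i, F x = i := by
  classical
  refine ⟨fun x => if h : ∃ i ∈ s, x ∈ W i then h.choose else f x, fun i hi x hx => ?_⟩
  have h : ∃ i ∈ s, x ∈ W i := ⟨i, hi, hx⟩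
  simp only [dif_pos h]
  by_contra hne
  exact disjoint_left.mp (hW h.choose_spec.1 hi hne) h.choose_spec.2 hx

theorem IsCompact.exists_isOpen_continuousOn_extension_of_discrete
    {X Z : Type*} [TopologicalSpace X] [T2Space X] [TopologicalSpace Z] [DiscreteTopology Z]
    {K : Set X} (hK : IsCompact K) {f : X → Z} (hf : ContinuousOn f K) :
    ∃ (U : Set X) (F : X → Z), IsOpen U ∧ K ⊆ U ∧ ContinuousOn F U ∧ EqOn F f K := by
  set S := f '' K
  have hS : S.Finite := (hK.image_of_continuousOn hf).finite_of_discrete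
  have hfibre (z : Z) : IsCompact (K ∩ f ⁻¹' {z}) :=
    hK.of_isClosed_subset (hf.preimage_isClosed_of_isClosed hK.isClosed isClosed_singleton)
      inter_subset_left
  have hdisj : S.PairwiseDisjoint fun z => 𝓝ˢ (K ∩ f ⁻¹' {z}) := by
    intro z _ w _ hzw
    refine (SeparatedNhds.of_isCompact_isCompact (hfibre z) (hfibre w) ?_).disjoint_nhdsSet
    exact disjoint_left.mpr fun x hxz hxw => hzw (hxz.2.symm.trans hxw.2)
  obtain ⟨W, hW, hWdisj⟩ := hdisj.exists_mem_filter_basis hS fun z => hasBasis_nhdsSet _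
  obtain ⟨F, hF⟩ := hWdisj.exists_eq_of_mem f
  have hfibre_sub {x : X} (hx : x ∈ K) : x ∈ W (f x) := (hW (f x)).2 ⟨hx, rfl⟩
  refine ⟨⋃ z ∈ S, W z, F, isOpen_biUnion fun z _ => (hW z).1,
    fun x hx => mem_biUnion (mem_image_of_mem f hx) (hfibre_sub hx), ?_,
    fun x hx => hF _ (mem_image_of_mem f hx) x (hfibre_sub hx)⟩
  intro x hx
  obtain ⟨z, hz, hxz⟩ := mem_iUnion₂.mp hx
  have hFz : F =ᶠ[𝓝 x] fun _ => z :=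
    eventually_of_mem ((hW z).1.mem_nhds hxz) (hF z hz)
  exact (continuousAt_const.congr hFz.symm).continuousWithinAt

section EquivariantLocus

variable (G : Type*) {X Z : Type*} [Group G] [MulAction G X] [MulAction G Z]

def equivariantLocus (U : Set X) (F : X → Z) : Set X :=
  {x | ∀ g : G, g • x ∈ U ∧ F (g • x) = g • F x}

variable {G} {U : Set X} {F : X → Z}

theorem equivariantLocus_subset : equivariantLocus G U F ⊆ U := fun x hx => by
  simpa using (hx 1).1

theorem smul_mem_equivariantLocus {x : X} (hx : x ∈ equivariantLocus G U F) (γ : G) :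
    γ • x ∈ equivariantLocus G U F := fun g =>
  ⟨by rw [smul_smul]; exact (hx _).1, by rw [smul_smul, (hx _).2, (hx γ).2, mul_smul]⟩

theorem subset_equivariantLocus {s : Set X} (hs : ∀ g : G, ∀ x ∈ s, g • x ∈ s) (hsU : s ⊆ U)
    (hF : ∀ g : G, ∀ x ∈ s, F (g • x) = g • F x) : s ⊆ equivariantLocus G U F := fun x hx g =>
  ⟨hsU (hs g x hx), hF g x hx⟩

theorem isOpen_equivariantLocus [Finite G] [TopologicalSpace X] [TopologicalSpace Z]
    [DiscreteTopology Z] (hact : ∀ g : G, Continuous fun x : X => g • x) (hU : IsOpen U)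
    (hF : ContinuousOn F U) : IsOpen (equivariantLocus G U F) := by
  have hlocal {y : X} (hy : y ∈ U) : ∀ᶠ y' in 𝓝 y, y' ∈ U ∧ F y' = F y := by
    have hFy : Tendsto F (𝓝 y) (pure (F y)) := by
      simpa only [ContinuousAt, nhds_discrete] using hF.continuousAt (hU.mem_nhds hy)
    exact (hU.eventually_mem hy).and (tendsto_pure.mp hFy)
  refine isOpen_iff_mem_nhds.mpr fun x hx => ?_
  filter_upwards [eventually_all.mpr fun g => (hact g).continuousAt.eventually (hlocal (hx g).1),
    hlocal (equivariantLocus_subset hx)] with y hgy hy g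
  exact ⟨(hgy g).1, by rw [(hgy g).2, (hx g).2, hy.2]⟩

end EquivariantLocus

theorem bredon_extend_orbit_map_from_compact_general
    {G X Z : Type*} [Group G] [Finite G]
    [TopologicalSpace X] [T2Space X] [MulAction G X]
    (hact : ∀ g : G, Continuous fun x : X => g • x)
    [TopologicalSpace Z] [DiscreteTopology Z] [MulAction G Z]
    (K : Set X) (hK : IsCompact K)
    (hKinv : ∀ (g : G), ∀ x ∈ K, g • x ∈ K)
    (f : X → Z) (hf : ContinuousOn f K)
    (hfe : ∀ (γ : G), ∀ y ∈ K, f (γ • y) = γ • f y) :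
    ∃ (U : Set X) (fhat : X → Z),
      IsOpen U ∧ (∀ (γ : G), ∀ y ∈ U, γ • y ∈ U) ∧ K ⊆ U ∧
      ContinuousOn fhat U ∧ (∀ (γ : G), ∀ y ∈ U, fhat (γ • y) = γ • fhat y) ∧
      Set.EqOn fhat f K := by
  obtain ⟨U, F, hU, hKU, hF, hFf⟩ := hK.exists_isOpen_continuousOn_extension_of_discrete hf
  have hFe (g : G) (x : X) (hx : x ∈ K) : F (g • x) = g • F x := by
    rw [hFf (hKinv g x hx), hFf hx, hfe g x hx]
  exact ⟨equivariantLocus G U F, F, isOpen_equivariantLocus hact hU hF,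
    fun γ y hy => smul_mem_equivariantLocus hy γ, subset_equivariantLocus hKinv hKU hFe,
    hF.mono equivariantLocus_subset, fun γ y hy => (hy γ).2, hFf⟩

/-- A continuous equivariant map from a `G`-invariant compact subset of a
locally compact Hausdorff `G`-space to a discrete orbit extends to a `G`-invariant open
neighbourhood. -/
theorem bredon_extend_orbit_map_from_compact
    {G X Z : Type*} [Group G] [Finite G]
    [TopologicalSpace X] [T2Space X] [LocallyCompactSpace X] [MulAction G X]
    (hact : ∀ g : G, Continuous fun x : X => g • x)
    [TopologicalSpace Z] [DiscreteTopology Z] [MulAction G Z]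
    [MulAction.IsPretransitive G Z]
    (K : Set X) (hK : IsCompact K)
    (hKinv : ∀ (g : G), ∀ x ∈ K, g • x ∈ K)
    (f : X → Z) (hf : ContinuousOn f K)
    (hfe : ∀ (γ : G), ∀ y ∈ K, f (γ • y) = γ • f y) :
    ∃ (U : Set X) (fhat : X → Z),
      IsOpen U ∧ (∀ (γ : G), ∀ y ∈ U, γ • y ∈ U) ∧ K ⊆ U ∧
      ContinuousOn fhat U ∧ (∀ (γ : G), ∀ y ∈ U, fhat (γ • y) = γ • fhat y) ∧
      Set.EqOn fhat f K :=
  bredon_extend_orbit_map_from_compact_general hact K hK hKinv f hf hfe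
end

section
/- Let G be a finite group and X a Hausdorff G-space such that every point admits a trivially proper neighbourhood (i.e., for each x there is a G-invariant open U ∋ x and a continuous G-equivariant retraction f : U → G·x). Then the map π : X → P_G sending x to the conjugacy class of its stabilizer G_x is continuous, where P_G is the poset of conjugacy classes of subgroups of G ordered by subconjugacy and equipped with the Alexandroff topology whose open sets are the downward-closed sets, so that each X_{≤(H)} is open. -/
/-- `H` is subconjugate to `K`: some conjugate of `H` is contained in `K`. -/
def Subconj {G : Type*} [Group G] (H K : Subgroup G) : Prop :=
  ∃ g : G, ∀ h ∈ H, g * h * g⁻¹ ∈ K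

/-- If every point of a Hausdorff `G`-space admits a trivially proper
neighbourhood, then the map `x ↦ (G_x)` to the poset of conjugacy classes of subgroups
(with the Alexandroff topology of the subconjugacy order, whose opens are the
downward-closed sets) is continuous; equivalently, each set
`X_{≤(H)} = {x | (G_x) ≤ (H)}` is open. -/
theorem bredon_orbit_type_map_continuous
    {G X : Type*} [Group G] [Finite G]
    [TopologicalSpace X] [T2Space X] [MulAction G X]
    (hact : ∀ g : G, Continuous fun x : X => g • x)
    (htpn : ∀ x : X, ∃ (U : Set X) (f : X → X),
      IsOpen U ∧ (∀ (g : G), ∀ y ∈ U, g • y ∈ U) ∧ x ∈ U ∧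
      ContinuousOn f U ∧ (∀ (g : G), ∀ y ∈ U, f (g • y) = g • f y) ∧
      (∀ y ∈ U, f y ∈ MulAction.orbit G x) ∧ f x = x) :
    ∀ H : Subgroup G, IsOpen {x : X | Subconj (MulAction.stabilizer G x) H} := by
  intro H
  rw [isOpen_iff_forall_mem_open]
  intro x hx
  obtain ⟨U, f, hU, _, hxU, _, hequiv, horb, _⟩ := htpn x
  refine ⟨U, ?_, hU, hxU⟩
  intro y hy
  obtain ⟨c, hc⟩ := hx
  obtain ⟨a, ha⟩ := horb y hy
  refine ⟨c * a⁻¹, ?_⟩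
  intro h hh
  have h2 : h • y = y := hh
  have h3 : h • f y = f y := by rw [← hequiv h y hy, h2]
  have hst : a⁻¹ * h * a ∈ MulAction.stabilizer G x := by
    rw [MulAction.mem_stabilizer_iff]
    have hax : a • x = f y := ha
    rw [mul_smul, mul_smul, hax, h3, ← hax, inv_smul_smul]
  have := hc _ hst
  have heq : c * (a⁻¹ * h * a) * c⁻¹ = (c * a⁻¹) * h * (c * a⁻¹)⁻¹ := by group
  rwa [heq] at this
end

section
/- Let G be a finite group. If X is a paracompact G-space of covering dimension at most n, then the orbit space X/G has covering dimension at most |G|(n+2) − 2. -/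
/-!
Pull an open cover of `X/G` back to `X`, refine it there, and push the refinement forward along
the quotient map, which is open. A point of `X/G` lying in `|G|(n + 2)` pushed-forward sets has
lifts in the corresponding sets upstairs; these lifts range over a single orbit, of at most `|G|`
points, so by pigeonhole `n + 2` of the sets upstairs share a point.
-/

/-- A topological space `Y` has covering dimension at most `n`: every open cover admits an
open refinement in which every intersection of `n + 2` distinct members is empty. -/
def HasCovDimLE (Y : Type*) [TopologicalSpace Y] (n : ℕ) : Prop :=
  ∀ 𝒰 : Set (Set Y), (∀ U ∈ 𝒰, IsOpen U) → ⋃₀ 𝒰 = Set.univ →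
    ∃ 𝒱 : Set (Set Y), (∀ V ∈ 𝒱, IsOpen V) ∧ ⋃₀ 𝒱 = Set.univ ∧
      (∀ V ∈ 𝒱, ∃ U ∈ 𝒰, V ⊆ U) ∧
      ∀ s : Finset (Set Y), ↑s ⊆ 𝒱 → s.card = n + 2 →
        ⋂₀ (↑s : Set (Set Y)) = ∅

section

open Set

variable {X Y : Type*}

theorem sInter_eq_empty_of_subset_image_of_encard_fiber_le {f : X → Y} {k n : ℕ}
    (hfib : ∀ y, (f ⁻¹' {y}).encard ≤ k) {𝒱 : Set (Set X)}
    (h𝒱 : ∀ s : Finset (Set X), ↑s ⊆ 𝒱 → s.card = n + 2 → ⋂₀ (↑s : Set (Set X)) = ∅)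
    {s : Finset (Set Y)} (hs : ↑s ⊆ image f '' 𝒱) (hs₀ : s.Nonempty)
    (hcard : k * (n + 2) ≤ s.card) :
    ⋂₀ (↑s : Set (Set Y)) = ∅ := by
  classical
  by_contra hne
  obtain ⟨y, hy⟩ := nonempty_iff_ne_empty.mpr hne
  have lift : ∀ W ∈ s, ∃ V ∈ 𝒱, f '' V = W ∧ ∃ x ∈ V, f x = y := by
    intro W hW
    obtain ⟨V, hV, rfl⟩ := hs hW
    obtain ⟨x, hx, hxy⟩ := hy _ hW
    exact ⟨V, hV, rfl, x, hx, hxy⟩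
  have : Nonempty X := by
    obtain ⟨W, hW⟩ := hs₀
    obtain ⟨-, -, -, x, -⟩ := lift W hW
    exact ⟨x⟩
  choose! V hV hVW x hxV hxy using lift
  have hlifts : (s.image x).card ≤ k := by
    have hsub : ↑(s.image x) ⊆ f ⁻¹' {y} := by
      simpa [Set.subset_def] using hxy
    obtain ⟨hfin, hncard⟩ := encard_le_coe_iff_finite_ncard_le.mp (hfib y)
    rw [← ncard_coe_finset]
    exact (ncard_le_ncard hsub hfin).trans hncard
  obtain ⟨x₀, -, hmany⟩ := Finset.exists_le_card_fiber_of_mul_le_card_of_maps_to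
    (fun W hW => Finset.mem_image_of_mem x hW) (hs₀.image x)
    ((Nat.mul_le_mul_right _ hlifts).trans hcard)
  obtain ⟨t, hts, htcard⟩ := Finset.exists_subset_card_eq hmany
  have hts' : ∀ W ∈ t, W ∈ s ∧ x W = x₀ := fun W hW => Finset.mem_filter.mp (hts hW)
  have hVinj : InjOn V t := fun W₁ h₁ W₂ h₂ h =>
    by rw [← hVW W₁ (hts' W₁ h₁).1, ← hVW W₂ (hts' W₂ h₂).1, h]
  have hempty := h𝒱 (t.image V)
    (by simpa [Set.subset_def] using fun W hW => hV W (hts' W hW).1)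
    (by rw [Finset.card_image_of_injOn hVinj, htcard])
  have hx₀_mem : x₀ ∈ ⋂₀ (↑(t.image V) : Set (Set X)) := by
    simp only [Finset.coe_image, sInter_image, mem_iInter₂]
    intro W hW
    exact (hts' W hW).2 ▸ hxV W (hts' W hW).1
  rwa [hempty] at hx₀_mem

theorem HasCovDimLE.of_isOpenQuotientMap [TopologicalSpace X] [TopologicalSpace Y] {f : X → Y}
    (hf : IsOpenQuotientMap f) {k n : ℕ} (hfib : ∀ y, (f ⁻¹' {y}).encard ≤ k)
    (hX : HasCovDimLE X n) : HasCovDimLE Y (k * (n + 2) - 2) := by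
  intro 𝒰 h𝒰open h𝒰cov
  obtain ⟨𝒱, h𝒱open, h𝒱cov, h𝒱ref, h𝒱int⟩ := hX (preimage f '' 𝒰)
    (forall_mem_image.mpr fun U hU => (h𝒰open U hU).preimage hf.continuous)
    (by rw [sUnion_image, ← preimage_sUnion, h𝒰cov, preimage_univ])
  refine ⟨image f '' 𝒱, forall_mem_image.mpr fun V hV => hf.isOpenMap V (h𝒱open V hV),
    by rw [← image_sUnion, h𝒱cov, image_univ_of_surjective hf.surjective], ?_, ?_⟩
  · refine forall_mem_image.mpr fun V hV => ?_
    obtain ⟨_, ⟨U, hU, rfl⟩, hVU⟩ := h𝒱ref V hV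
    exact ⟨U, hU, image_subset_iff.mpr hVU⟩
  · intro s hs hcard
    exact sInter_eq_empty_of_subset_image_of_encard_fiber_le hfib h𝒱int hs
      (Finset.card_pos.mp (by omega)) (by omega)

theorem MulAction.encard_preimage_quotientMk_le {G : Type*} [Group G] [Finite G] [MulAction G X]
    (y : orbitRel.Quotient G X) : (Quotient.mk _ ⁻¹' {y}).encard ≤ Nat.card G := by
  induction y using Quotient.inductionOn with | h x => ?_
  have hfiber : Quotient.mk (orbitRel G X) ⁻¹' {⟦x⟧} = range fun g : G => g • x := by
    ext x'
    simp [Quotient.eq, orbitRel_apply, mem_orbit_iff]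
  rw [hfiber, ← image_univ, ← ENat.card_eq_coe_natCard, ← encard_univ]
  exact encard_image_le _ _

end

theorem bredon_covdim_orbit_space_general
    {G X : Type*} [Group G] [Finite G]
    [TopologicalSpace X] [MulAction G X]
    (hact : ∀ g : G, Continuous fun x : X => g • x)
    (n : ℕ) (hX : HasCovDimLE X n) :
    HasCovDimLE (Quotient (MulAction.orbitRel G X)) (Nat.card G * (n + 2) - 2) :=
  have : ContinuousConstSMul G X := ⟨hact⟩
  hX.of_isOpenQuotientMap MulAction.isOpenQuotientMap_quotientMk
    MulAction.encard_preimage_quotientMk_le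

/-- If `X` is a paracompact `G`-space of covering dimension at most `n`
(`G` finite), then the orbit space `X/G` has covering dimension at most `|G|(n+2) - 2`. -/
theorem bredon_covdim_orbit_space
    {G X : Type*} [Group G] [Finite G]
    [TopologicalSpace X] [ParacompactSpace X] [MulAction G X]
    (hact : ∀ g : G, Continuous fun x : X => g • x)
    (n : ℕ) (hX : HasCovDimLE X n) :
    HasCovDimLE (Quotient (MulAction.orbitRel G X)) (Nat.card G * (n + 2) - 2) :=
  bredon_covdim_orbit_space_general hact n hX
end

section
/- Let G be a finite group. The orbit-space functor from compact Hausdorff G-spaces to compact Hausdorff spaces preserves cofiltered limits: if (X_i)_{i∈I} is a cofiltered diagram of compact Hausdorff G-spaces with limit X = lim_i X_i, then the canonical continuous map X/G → lim_i (X_i/G) is a homeomorphism. -/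
variable {G : Type*} [Group G]
variable {I : Type*} [Preorder I]
variable {Xs : I → Type*}

/-- The inverse limit of a diagram of topological spaces indexed by a preorder. -/
def InvLim (F : ∀ ⦃i j : I⦄, i ≤ j → Xs i → Xs j) : Type _ :=
  {u : ∀ i, Xs i // ∀ ⦃i j : I⦄ (h : i ≤ j), F h (u i) = u j}

instance [∀ i, TopologicalSpace (Xs i)] (F : ∀ ⦃i j : I⦄, i ≤ j → Xs i → Xs j) :
    TopologicalSpace (InvLim F) :=
  instTopologicalSpaceSubtype

/-- The orbit equivalence relation on the inverse limit, for the diagonal `G`-action. -/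
def invLimOrbitSetoid [∀ i, MulAction G (Xs i)]
    (F : ∀ ⦃i j : I⦄, i ≤ j → Xs i → Xs j) : Setoid (InvLim F) where
  r u v := ∃ g : G, ∀ i, g • u.1 i = v.1 i
  iseqv := by
    constructor
    · exact fun u => ⟨1, fun i => one_smul _ _⟩
    · rintro u v ⟨g, hg⟩
      exact ⟨g⁻¹, fun i => by rw [← hg i, inv_smul_smul]⟩
    · rintro u v w ⟨g, hg⟩ ⟨g', hg'⟩
      exact ⟨g' * g, fun i => by rw [mul_smul, hg i, hg' i]⟩

/-- The map induced by an equivariant transition map on orbit spaces. -/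
def orbitQuotMap [∀ i, MulAction G (Xs i)]
    (F : ∀ ⦃i j : I⦄, i ≤ j → Xs i → Xs j)
    (hFe : ∀ ⦃i j : I⦄ (h : i ≤ j) (g : G) (x : Xs i), F h (g • x) = g • F h x)
    ⦃i j : I⦄ (h : i ≤ j) :
    Quotient (MulAction.orbitRel G (Xs i)) → Quotient (MulAction.orbitRel G (Xs j)) :=
  Quotient.map (F h) (by
    rintro x y ⟨g, rfl⟩
    exact ⟨g, (hFe h g y).symm⟩)

/-- The cofiltered limit of the orbit spaces `X_i/G`. -/
def InvLimOrbits [∀ i, MulAction G (Xs i)]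
    (F : ∀ ⦃i j : I⦄, i ≤ j → Xs i → Xs j)
    (hFe : ∀ ⦃i j : I⦄ (h : i ≤ j) (g : G) (x : Xs i), F h (g • x) = g • F h x) :
    Type _ :=
  {v : ∀ i, Quotient (MulAction.orbitRel G (Xs i)) //
    ∀ ⦃i j : I⦄ (h : i ≤ j), orbitQuotMap F hFe h (v i) = v j}

instance [∀ i, TopologicalSpace (Xs i)] [∀ i, MulAction G (Xs i)]
    (F : ∀ ⦃i j : I⦄, i ≤ j → Xs i → Xs j)
    (hFe : ∀ ⦃i j : I⦄ (h : i ≤ j) (g : G) (x : Xs i), F h (g • x) = g • F h x) :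
    TopologicalSpace (InvLimOrbits F hFe) :=
  instTopologicalSpaceSubtype

/-- The canonical map `(lim_i X_i)/G → lim_i (X_i/G)`. -/
def orbitComparisonMap [∀ i, MulAction G (Xs i)]
    (F : ∀ ⦃i j : I⦄, i ≤ j → Xs i → Xs j)
    (hFe : ∀ ⦃i j : I⦄ (h : i ≤ j) (g : G) (x : Xs i), F h (g • x) = g • F h x) :
    Quotient (invLimOrbitSetoid (G := G) F) → InvLimOrbits F hFe :=
  Quotient.lift
    (fun u => ⟨fun i => Quotient.mk _ (u.1 i), fun i j h => by
      show orbitQuotMap F hFe h (Quotient.mk _ (u.1 i)) = Quotient.mk _ (u.1 j)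
      rw [← u.2 h]
      rfl⟩)
    (by
      rintro u v ⟨g, hg⟩
      refine Subtype.ext (funext fun i => Quotient.sound ?_)
      exact ⟨g⁻¹, by simp [← hg i]⟩)

/-!
The orbit space `X/G` of the compact limit `X` is compact and `lim_i (X_i/G)` is Hausdorff, so
it suffices that the comparison map is bijective.
If `u, v ∈ X` lie in the same orbit at every stage, the sets `{g | g • u_i = v_i}` are nonempty
and grow along the transition maps; since `G` is finite and `I` cofiltered, one element of `G`
lies in all of them. Conversely, for a point `(ξ_i)` of `lim_i (X_i/G)` the orbits `ξ_i ⊆ X_i`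
form a cofiltered system of nonempty finite sets, which has a section by König's lemma.
-/

open Set CategoryTheory MulAction

theorem nonempty_iInter_of_monotone_of_finite {α ι : Type*} [Finite α] [Nonempty α]
    [Preorder ι] [IsCodirectedOrder ι] {S : ι → Set α} (hS : Monotone S)
    (hne : ∀ i, (S i).Nonempty) :
    (⋂ i, S i).Nonempty := by
  by_contra! h
  have hout : ∀ a, ∃ i, a ∉ S i := by simpa [eq_empty_iff_forall_notMem] using h
  choose idx hidx using hout
  have : Nonempty ι := ⟨idx (Classical.arbitrary α)⟩
  obtain ⟨k, hk⟩ := Finite.exists_ge idx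
  obtain ⟨a, ha⟩ := hne k
  exact hidx a (hS (hk a) ha)

theorem MulAction.orbitRel.Quotient.finite_orbit {α : Type*} [Finite G] [MulAction G α]
    (x : orbitRel.Quotient G α) : x.orbit.Finite := by
  induction x using Quotient.inductionOn'
  exact Finite.finite_mulAction_orbit _

namespace InvLim

variable {F : ∀ ⦃i j : I⦄, i ≤ j → Xs i → Xs j}

theorem compactSpace [∀ i, TopologicalSpace (Xs i)] [∀ i, CompactSpace (Xs i)]
    [∀ i, T2Space (Xs i)] (hFc : ∀ ⦃i j : I⦄ (h : i ≤ j), Continuous (F h)) :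
    CompactSpace (InvLim F) := by
  have hclosed : IsClosed {u : ∀ i, Xs i | ∀ ⦃i j : I⦄ (h : i ≤ j), F h (u i) = u j} := by
    simp only [ofPred_forall]
    exact isClosed_iInter fun i => isClosed_iInter fun j => isClosed_iInter fun h =>
      isClosed_eq ((hFc h).comp (continuous_apply i)) (continuous_apply j)
  exact isCompact_iff_compactSpace.mp hclosed.isCompact

theorem exists_forall_mem [IsCodirectedOrder I] (hFid : ∀ (i : I) (x : Xs i), F (le_refl i) x = x)
    (hFcomp : ∀ ⦃i j k : I⦄ (hij : i ≤ j) (hjk : j ≤ k) (x : Xs i),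
      F hjk (F hij x) = F (hij.trans hjk) x)
    {T : ∀ i, Set (Xs i)} (hfin : ∀ i, (T i).Finite) (hne : ∀ i, (T i).Nonempty)
    (hmaps : ∀ ⦃i j : I⦄ (h : i ≤ j), MapsTo (F h) (T i) (T j)) :
    ∃ u : InvLim F, ∀ i, u.1 i ∈ T i := by
  let D : I ⥤ Type _ :=
    { obj i := T i
      map f := TypeCat.ofHom ((hmaps f.le).restrict _ _ _)
      map_id i := ConcreteCategory.hom_ext _ _ fun x => Subtype.ext (hFid i x)
      map_comp f g := ConcreteCategory.hom_ext _ _ fun x => Subtype.ext (hFcomp f.le g.le x).symm }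
  have : ∀ i, Finite (D.obj i) := fun i => (hfin i).to_subtype
  have : ∀ i, Nonempty (D.obj i) := fun i => (hne i).to_subtype
  obtain ⟨s, hs⟩ := nonempty_sections_of_finite_cofiltered_system D
  exact ⟨⟨fun i => (s i).1, fun i j h => congrArg Subtype.val (hs (homOfLE h))⟩,
    fun i => (s i).2⟩

end InvLim

section Comparison

variable [∀ i, MulAction G (Xs i)] {F : ∀ ⦃i j : I⦄, i ≤ j → Xs i → Xs j}
  (hFe : ∀ ⦃i j : I⦄ (h : i ≤ j) (g : G) (x : Xs i), F h (g • x) = g • F h x)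

theorem continuous_orbitComparisonMap [∀ i, TopologicalSpace (Xs i)] :
    Continuous (orbitComparisonMap F hFe) := by
  apply Continuous.quotient_lift
  exact Continuous.subtype_mk (continuous_pi fun i =>
    continuous_quot_mk.comp ((continuous_apply i).comp continuous_subtype_val)) _

theorem orbitComparisonMap_injective [Finite G] [IsCodirectedOrder I] :
    Function.Injective (orbitComparisonMap F hFe) := by
  rintro ⟨u⟩ ⟨v⟩ huv
  let S : I → Set G := fun i => {g | g • u.1 i = v.1 i}
  have hne : ∀ i, (S i).Nonempty := fun i => by
    obtain ⟨g, hg⟩ := Quotient.exact (congrFun (congrArg Subtype.val huv) i)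
    exact ⟨g⁻¹, show g⁻¹ • u.1 i = v.1 i by rw [← hg, inv_smul_smul]⟩
  have hS : Monotone S := fun i j h g (hg : g • u.1 i = v.1 i) => by
    change g • u.1 j = v.1 j
    rw [← u.2 h, ← v.2 h, ← hFe, hg]
  obtain ⟨g, hg⟩ := nonempty_iInter_of_monotone_of_finite hS hne
  exact Quotient.sound ⟨g, mem_iInter.mp hg⟩

theorem orbitComparisonMap_surjective [Finite G] [IsCodirectedOrder I]
    (hFid : ∀ (i : I) (x : Xs i), F (le_refl i) x = x)
    (hFcomp : ∀ ⦃i j k : I⦄ (hij : i ≤ j) (hjk : j ≤ k) (x : Xs i),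
      F hjk (F hij x) = F (hij.trans hjk) x) :
    Function.Surjective (orbitComparisonMap F hFe) := by
  rintro ⟨ξ, hξ⟩
  have hmaps : ∀ ⦃i j : I⦄ (h : i ≤ j), MapsTo (F h)
      (orbitRel.Quotient.orbit (ξ i)) (orbitRel.Quotient.orbit (ξ j)) := by
    intro i j h x hx
    rw [orbitRel.Quotient.mem_orbit] at hx ⊢
    rw [← hξ h, ← hx]
    rfl
  obtain ⟨u, hu⟩ := InvLim.exists_forall_mem hFid hFcomp
    (fun i => orbitRel.Quotient.finite_orbit (ξ i))
    (fun i => orbitRel.Quotient.nonempty_orbit (ξ i)) hmaps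
  exact ⟨Quotient.mk _ u, Subtype.ext (funext fun i =>
    orbitRel.Quotient.mem_orbit.mp (hu i))⟩

end Comparison

theorem bredon_orbit_functor_preserves_cofiltered_limits_general
    [Finite G] [IsDirected I (· ≥ ·)]
    [∀ i, TopologicalSpace (Xs i)] [∀ i, CompactSpace (Xs i)] [∀ i, T2Space (Xs i)]
    [∀ i, MulAction G (Xs i)]
    (hact : ∀ (i : I) (g : G), Continuous fun x : Xs i => g • x)
    (F : ∀ ⦃i j : I⦄, i ≤ j → Xs i → Xs j)
    (hFc : ∀ ⦃i j : I⦄ (h : i ≤ j), Continuous (F h))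
    (hFid : ∀ (i : I) (x : Xs i), F (le_refl i) x = x)
    (hFcomp : ∀ ⦃i j k : I⦄ (hij : i ≤ j) (hjk : j ≤ k) (x : Xs i),
      F hjk (F hij x) = F (hij.trans hjk) x)
    (hFe : ∀ ⦃i j : I⦄ (h : i ≤ j) (g : G) (x : Xs i), F h (g • x) = g • F h x) :
    IsHomeomorph (orbitComparisonMap F hFe) := by
  have : ∀ i, ContinuousConstSMul G (Xs i) := fun i => ⟨hact i⟩
  have := InvLim.compactSpace hFc
  have : T2Space (InvLimOrbits F hFe) := instT2SpaceSubtype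
  rw [isHomeomorph_iff_continuous_bijective]
  exact ⟨continuous_orbitComparisonMap hFe, orbitComparisonMap_injective hFe,
    orbitComparisonMap_surjective hFe hFid hFcomp⟩

/-- For a finite group `G`, the orbit-space functor on compact Hausdorff
`G`-spaces preserves cofiltered limits: the canonical continuous map
`(lim_i X_i)/G → lim_i (X_i/G)` is a homeomorphism. -/
theorem bredon_orbit_functor_preserves_cofiltered_limits
    [Finite G] [IsDirected I (· ≥ ·)] [Nonempty I]
    [∀ i, TopologicalSpace (Xs i)] [∀ i, CompactSpace (Xs i)] [∀ i, T2Space (Xs i)]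
    [∀ i, MulAction G (Xs i)]
    (hact : ∀ (i : I) (g : G), Continuous fun x : Xs i => g • x)
    (F : ∀ ⦃i j : I⦄, i ≤ j → Xs i → Xs j)
    (hFc : ∀ ⦃i j : I⦄ (h : i ≤ j), Continuous (F h))
    (hFid : ∀ (i : I) (x : Xs i), F (le_refl i) x = x)
    (hFcomp : ∀ ⦃i j k : I⦄ (hij : i ≤ j) (hjk : j ≤ k) (x : Xs i),
      F hjk (F hij x) = F (hij.trans hjk) x)
    (hFe : ∀ ⦃i j : I⦄ (h : i ≤ j) (g : G) (x : Xs i), F h (g • x) = g • F h x) :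
    IsHomeomorph (orbitComparisonMap F hFe) :=
  bredon_orbit_functor_preserves_cofiltered_limits_general hact F hFc hFid hFcomp hFe
end

section
/- Let G be a finite group and F a functor from the opposite of the category of compact Hausdorff spaces to sets satisfying cofiltered compact codescent (F maps cofiltered limits of compact Hausdorff spaces to filtered colimits of sets). Then F is homotopy invariant on the interval: the two maps F(i_0), F(i_1) : F([0,1]) → F(pt) induced by the endpoint inclusions i_0, i_1 : pt → [0,1] are equal, and consequently F sends the projection [0,1] → pt to a bijection. -/
open CategoryTheory CategoryTheory.Limits Opposite

/-- The canonical comparison map `colim_i F(X_i) → F(lim_i X_i)` associated to a cone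
over a diagram of compact Hausdorff spaces and a `Set`-valued functor `F`. -/
noncomputable def codescentComparison (F : CompHausᵒᵖ ⥤ Type)
    {I : Type} [SmallCategory I] (D : I ⥤ CompHaus) (c : Cone D) :
    colimit (D.op ⋙ F) → F.obj (op c.pt) :=
  colimit.desc (D.op ⋙ F)
    { pt := F.obj (op c.pt)
      ι :=
        { app := fun i => F.map (c.π.app i.unop).op
          naturality := by
            intro i j f
            simp only [Functor.comp_map, Functor.op_map, Functor.const_obj_map,
              Category.comp_id]
            rw [← F.map_comp, ← op_comp, c.w f.unop]
            exact (Category.comp_id _).symm } }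

/-- `F` satisfies cofiltered compact codescent: it takes cofiltered limits of compact
Hausdorff spaces to filtered colimits. -/
def CofilteredCompactCodescent (F : CompHausᵒᵖ ⥤ Type) : Prop :=
  ∀ (I : Type) (_ : SmallCategory I) (_ : IsCofiltered I)
    (D : I ⥤ CompHaus) (c : Cone D) (_ : IsLimit c),
    Function.Bijective (codescentComparison F D c)

/-!
For a point `s` of a compact Hausdorff space `T`, the slice `{s} × X` is the cofiltered
intersection of the compact sets `N × X` over the closed neighbourhoods `N` of `s`. By
codescent, two maps `N × X → Y` that induce the same map on `F` after restriction to `{s} × X`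
already do so after restriction to some smaller `N' × X`. Comparing a homotopy `K : T × X → Y`
with `K(s, -) ∘ pr₂` in this way shows that `t ↦ F(K(t, -))` is locally constant, hence
constant on a connected `T`. So `F` identifies homotopic maps; as `[0,1]` is contractible, the
two endpoint inclusions agree and `F(i₀)` is inverse to `F` of the projection `[0,1] → pt`.
-/

universe u

open Topology Filter

abbrev ClosedNhd {T : Type u} [TopologicalSpace T] (s : T) : Type u :=
  {N : Set T // N ∈ 𝓝 s ∧ IsClosed N}

namespace ClosedNhd

variable {T : Type u} [TopologicalSpace T] (s : T)

instance : SemilatticeInf (ClosedNhd s) :=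
  Subtype.semilatticeInf fun _ _ hM hN => ⟨inter_mem hM.1 hN.1, hM.2.inter hN.2⟩

instance : OrderTop (ClosedNhd s) := Subtype.orderTop ⟨univ_mem, isClosed_univ⟩

instance [CompactSpace T] (N : ClosedNhd s) : CompactSpace N.1 :=
  isCompact_iff_compactSpace.mp N.2.2.isCompact

variable {s}

lemma mem (N : ClosedNhd s) : s ∈ N.1 := mem_of_mem_nhds N.2.1

lemma eq_of_forall_mem [RegularSpace T] [T1Space T] {t : T} (h : ∀ N : ClosedNhd s, t ∈ N.1) :
    t = s := by
  have ht : t ∈ (𝓝 s).ker := by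
    rw [(closed_nhds_basis s).ker]
    exact Set.mem_iInter₂.mpr fun N hN => h ⟨N, hN⟩
  rwa [ker_nhds] at ht

end ClosedNhd

section SliceLimit

variable {T : Type u} [TopologicalSpace T] [CompactSpace T] [T2Space T] (s : T) (X : CompHaus.{u})

def nhdsProdDiagram : ClosedNhd s ⥤ CompHaus.{u} where
  obj N := CompHaus.of (N.1 × X)
  map f := ConcreteCategory.ofHom ⟨Prod.map (Set.inclusion f.le) id, by fun_prop⟩
  map_id _ := rfl
  map_comp _ _ := rfl

def sliceCone : Cone (nhdsProdDiagram s X) where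
  pt := X
  π.app N := ConcreteCategory.ofHom ⟨fun x => (⟨s, N.mem⟩, x), by fun_prop⟩
  π.naturality _ _ _ := rfl

variable {s X}

lemma nhdsProdDiagram_cone_apply_of_le (c : Cone (nhdsProdDiagram s X)) {M N : ClosedNhd s}
    (h : M ≤ N) (z : c.pt) :
    c.π.app N z = Prod.map (Set.inclusion h) id (c.π.app M z) :=
  (ConcreteCategory.congr_hom (c.w (homOfLE h)) z).symm

lemma nhdsProdDiagram_cone_fst (c : Cone (nhdsProdDiagram s X)) (N : ClosedNhd s) (z : c.pt) :
    ((c.π.app N z).1 : T) = s :=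
  ClosedNhd.eq_of_forall_mem fun M => by
    rw [nhdsProdDiagram_cone_apply_of_le c (inf_le_left : N ⊓ M ≤ N)]
    exact (c.π.app (N ⊓ M) z).1.2.2

variable (s X)

def isLimitSliceCone : IsLimit (sliceCone s X) where
  lift c := c.π.app ⊤ ≫ ConcreteCategory.ofHom ⟨Prod.snd, continuous_snd⟩
  fac c N := by
    ext z
    refine Prod.ext (Subtype.ext (nhdsProdDiagram_cone_fst c N z).symm) ?_
    exact (congrArg Prod.snd (nhdsProdDiagram_cone_apply_of_le c (le_top : N ≤ ⊤) z) :)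
  uniq c m hm := by
    ext z
    exact congrArg Prod.snd (ConcreteCategory.congr_hom (hm ⊤) z)

end SliceLimit

namespace CofilteredCompactCodescent

variable {F : CompHausᵒᵖ ⥤ Type} (hF : CofilteredCompactCodescent F)
include hF

lemma exists_map_comp_eq {I : Type} [SmallCategory I] [IsCofiltered I] {D : I ⥤ CompHaus}
    {c : Cone D} (hc : IsLimit c) {i : I} {Y : CompHaus} {g₁ g₂ : D.obj i ⟶ Y}
    (ξ : F.obj (op Y))
    (h : F.map (c.π.app i ≫ g₁).op ξ = F.map (c.π.app i ≫ g₂).op ξ) :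
    ∃ (j : I) (f : j ⟶ i), F.map (D.map f ≫ g₁).op ξ = F.map (D.map f ≫ g₂).op ξ := by
  have hι : ∀ x, codescentComparison F D c (colimit.ι (D.op ⋙ F) (op i) x) =
      F.map (c.π.app i).op x :=
    fun x => colimit.ι_desc_apply (C := Type) _ (op i) x
  have hcolim : colimit.ι (D.op ⋙ F) (op i) (F.map g₁.op ξ) =
      colimit.ι (D.op ⋙ F) (op i) (F.map g₂.op ξ) := by
    refine (hF I inferInstance inferInstance D c hc).injective ?_
    simpa only [hι, ← Functor.map_comp_apply, ← op_comp] using h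
  obtain ⟨j, f, hf⟩ :=
    (Types.FilteredColimit.isColimit_eq_iff' (colimit.isColimit _) _ _).mp hcolim
  refine ⟨unop j, f.unop, ?_⟩
  simpa only [op_comp, Functor.map_comp_apply, Functor.comp_map, Functor.op_map] using hf

variable {T : Type} [TopologicalSpace T] [CompactSpace T] [T2Space T]

lemma eventually_map_curry_eq {X Y : CompHaus.{0}} (K : C(T × X, Y)) (ξ : F.obj (op Y))
    (s : T) :
    ∀ᶠ t in 𝓝 s, F.map (ConcreteCategory.ofHom (K.curry t) : X ⟶ Y).op ξ =
      F.map (ConcreteCategory.ofHom (K.curry s) : X ⟶ Y).op ξ := by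
  let restrict : (nhdsProdDiagram s X).obj ⊤ ⟶ Y :=
    ConcreteCategory.ofHom (K.comp ⟨Prod.map Subtype.val id, by fun_prop⟩)
  let project : (nhdsProdDiagram s X).obj ⊤ ⟶ X :=
    ConcreteCategory.ofHom ⟨Prod.snd, continuous_snd⟩
  -- on the slice `{s} × X` both `restrict` and `project ≫ K(s, -)` are `K(s, -)`
  obtain ⟨N, f, hN⟩ := hF.exists_map_comp_eq (isLimitSliceCone s X) (g₁ := restrict)
    (g₂ := project ≫ ConcreteCategory.ofHom (K.curry s)) ξ rfl
  filter_upwards [N.2.1] with t ht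
  let slice : X ⟶ (nhdsProdDiagram s X).obj N :=
    ConcreteCategory.ofHom ⟨fun x => (⟨t, ht⟩, x), by fun_prop⟩
  have hslice := congrArg (F.map slice.op) hN
  simp only [← Functor.map_comp_apply, ← op_comp] at hslice
  exact hslice

lemma map_curry_eq [PreconnectedSpace T] {X Y : CompHaus.{0}} (K : C(T × X, Y)) (s t : T) :
    F.map (ConcreteCategory.ofHom (K.curry s) : X ⟶ Y).op =
      F.map (ConcreteCategory.ofHom (K.curry t) : X ⟶ Y).op := by
  ext ξ
  exact ((IsLocallyConstant.iff_eventually_eq _).mpr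
    fun s => hF.eventually_map_curry_eq K ξ s).apply_eq_of_preconnectedSpace s t

lemma map_eq_of_homotopic {X Y : CompHaus.{0}} {f g : X ⟶ Y}
    (h : (ConcreteCategory.hom f).Homotopic (ConcreteCategory.hom g)) :
    F.map f.op = F.map g.op := by
  obtain ⟨H⟩ := h
  have hf : f = (ConcreteCategory.ofHom (H.toContinuousMap.curry 0) : X ⟶ Y) := by
    ext x; exact (H.apply_zero x).symm
  have hg : g = (ConcreteCategory.ofHom (H.toContinuousMap.curry 1) : X ⟶ Y) := by
    ext x; exact (H.apply_one x).symm
  have hH := hF.map_curry_eq H.toContinuousMap 0 1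
  rwa [← hf, ← hg] at hH

end CofilteredCompactCodescent

lemma ContinuousMap.homotopic_of_contractibleSpace {X Y : Type*} [TopologicalSpace X]
    [TopologicalSpace Y] [ContractibleSpace Y] (f g : C(X, Y)) : f.Homotopic g := by
  obtain ⟨y, hy⟩ := id_nullhomotopic Y
  have hf : f.Homotopic (ContinuousMap.const X y) := hy.comp (.refl f)
  have hg : g.Homotopic (ContinuousMap.const X y) := hy.comp (.refl g)
  exact hf.trans hg.symm

instance : ContractibleSpace unitInterval :=
  (convex_Icc (0 : ℝ) 1).contractibleSpace ⟨0, unitInterval.zero_mem⟩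

/-- A `Set`-valued functor on compact Hausdorff spaces satisfying
cofiltered compact codescent is homotopy invariant on the interval: the two maps
`F([0,1]) → F(pt)` induced by the endpoint inclusions coincide, and `F` sends the
projection `[0,1] → pt` to a bijection. -/
theorem bredon_codescent_implies_interval_homotopy_invariance
    (F : CompHausᵒᵖ ⥤ Type) (hF : CofilteredCompactCodescent F) :
    (F.map (Quiver.Hom.op
        (ConcreteCategory.ofHom ⟨fun _ => (0 : unitInterval), continuous_const⟩ :
          CompHaus.of PUnit ⟶ CompHaus.of unitInterval)) =
      F.map (Quiver.Hom.op
        (ConcreteCategory.ofHom ⟨fun _ => (1 : unitInterval), continuous_const⟩ :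
          CompHaus.of PUnit ⟶ CompHaus.of unitInterval))) ∧
    Function.Bijective
      (F.map (Quiver.Hom.op
        (ConcreteCategory.ofHom ⟨fun _ => PUnit.unit, continuous_const⟩ :
          CompHaus.of unitInterval ⟶ CompHaus.of PUnit))) := by
  have hI {X : CompHaus.{0}} (f g : X ⟶ CompHaus.of unitInterval) : F.map f.op = F.map g.op :=
    hF.map_eq_of_homotopic (ContinuousMap.homotopic_of_contractibleSpace _ _)
  refine ⟨hI _ _, Function.bijective_iff_has_inverse.mpr ⟨F.map (Quiver.Hom.op
    (ConcreteCategory.ofHom ⟨fun _ => (0 : unitInterval), continuous_const⟩ :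
      CompHaus.of PUnit ⟶ CompHaus.of unitInterval)), fun ξ => ?_, fun ξ => ?_⟩⟩
  · rw [← Functor.map_comp_apply, ← op_comp]
    exact F.map_id_apply _ ξ
  · rw [← Functor.map_comp_apply, ← op_comp, hI _ (𝟙 _), op_id, F.map_id_apply]
end
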